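/- Let s: ℕ→ℕ be a monotone function and α < ε₀ an ordinal. (i) If s is strictly expansive (s(x) > x for all x), then for all x ∈ ℕ, F_{α,s}(x) ≤ F_{s,α}(s(x)). (ii) If instead s(x) ≤ x for all x, then for all x ∈ ℕ, F_{α,s}(x) ≤ F_α(x). -/

import Mathlib

open ONote Ordinal

/-- The relativized fast-growing hierarchy `F_{h,α}`, indexed by ordinal notations `< ε₀`:
`F_{h,0} = h`, `F_{h,α+1}(x) = F_{h,α}^[x+1](x)`, and `F_{h,λ}(x) = F_{h,λ(x)}(x)` for `λ` a
limit, using the standard assignment of fundamental sequences.  The (standard) fast-growing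
hierarchy `F_α` of the paper is recovered as `FGH Nat.succ`. -/
def FGH (h : ℕ → ℕ) : ONote → ℕ → ℕ
  | o =>
    match fundamentalSequence o, fundamentalSequence_has_prop o with
    | Sum.inl none, _ => h
    | Sum.inl (some a), hp =>
      have : a < o := by rw [lt_def, hp.1]; exact Order.lt_succ _
      fun i => (FGH h a)^[i + 1] i
    | Sum.inr f, hp => fun i =>
      have : f i < o := (hp.2.1 i).2.1
      FGH h (f i) i
  termination_by o => o

/-- `ω^e · k` as an ordinal notation. -/
def opowMulNat (e : ONote) : ℕ → ONote
  | 0 => 0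
  | k + 1 => ONote.oadd e k.succPNat 0

/-- The `s`-assignment of fundamental sequences, evaluated at `x`: `fseqS s x α` returns
`Sum.inl none` when `α = 0`, `Sum.inl (some β)` when `α = β + 1`, and `Sum.inr (α(x)_s)` when
`α` is a limit, where `(γ+ω^{β+1})(x)_s = γ+ω^β·s(x)` and `(γ+ω^{λ'})(x)_s = γ+ω^{λ'(x)_s}`. -/
def fseqS (s : ℕ → ℕ) (x : ℕ) : ONote → Option ONote ⊕ ONote
  | ONote.zero => Sum.inl none
  | ONote.oadd e n a =>
    match fseqS s x a with
    | Sum.inl (some a') => Sum.inl (some (ONote.oadd e n a'))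
    | Sum.inr b => Sum.inr (ONote.oadd e n b)
    | Sum.inl none =>
      match fseqS s x e, n.natPred with
      | Sum.inl none, 0 => Sum.inl (some 0)
      | Sum.inl none, m + 1 => Sum.inl (some (ONote.oadd 0 m.succPNat 0))
      | Sum.inl (some e'), 0 => Sum.inr (opowMulNat e' (s x))
      | Sum.inl (some e'), m + 1 => Sum.inr (ONote.oadd e m.succPNat (opowMulNat e' (s x)))
      | Sum.inr e'', 0 => Sum.inr (ONote.oadd e'' 1 0)
      | Sum.inr e'', m + 1 => Sum.inr (ONote.oadd e m.succPNat (ONote.oadd e'' 1 0))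

private lemma aux0 {E A : Ordinal} {k N : ℕ} (h : k < N) : (k : Ordinal) < ω ^ E * N + A := by
  have h1 : (k : Ordinal) < (N : Ordinal) := by exact_mod_cast h
  have h2 : (N : Ordinal) ≤ ω ^ E * N := by
    calc (N : Ordinal) = 1 * N := (one_mul _).symm
      _ ≤ ω ^ E * N := by gcongr; exact Order.one_le_iff_pos.2 (opow_pos E omega0_pos)
  exact lt_of_lt_of_le (h1.trans_le h2) le_self_add

private lemma aux1 {E A R : Ordinal} {N : ℕ} (hN : 1 ≤ N) (hR : R < ω ^ E) :
    R < ω ^ E * N + A := by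
  have h2 : ω ^ E ≤ ω ^ E * N := by
    calc ω ^ E = ω ^ E * 1 := (mul_one _).symm
      _ ≤ ω ^ E * N := by gcongr; exact_mod_cast hN
  exact lt_of_lt_of_le (hR.trans_le h2) le_self_add

private lemma aux2 {E A R : Ordinal} {m N : ℕ} (hN : m + 2 ≤ N) (hR : R < ω ^ E) :
    ω ^ E * (↑(m + 1) : Ordinal) + R < ω ^ E * N + A := by
  have h1 : ω ^ E * (↑(m + 1) : Ordinal) + R < ω ^ E * (↑(m + 2) : Ordinal) := by
    have h0 : ω ^ E * (↑(m + 2) : Ordinal) = ω ^ E * (↑(m + 1) : Ordinal) + ω ^ E := by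
      rw [show m + 2 = (m + 1) + 1 from rfl, natCast_succ, mul_succ]
    rw [h0]
    exact (add_lt_add_iff_left _).2 hR
  have h2 : ω ^ E * (↑(m + 2) : Ordinal) ≤ ω ^ E * N :=
    by gcongr
  exact lt_of_lt_of_le h1 (h2.trans le_self_add)

private lemma repr_opowMulNat_lt {e' e : ONote} (h : e' < e) (k : ℕ) :
    ONote.repr (opowMulNat e' k) < ω ^ ONote.repr e := by
  cases k with
  | zero => simpa [opowMulNat] using opow_pos (ONote.repr e) omega0_pos
  | succ j =>
    simp only [opowMulNat, ONote.repr, add_zero, Nat.succPNat_coe]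
    exact omega0_opow_mul_nat_lt (ONote.lt_def.1 h) (j + 1)

theorem fseqS_lt (s : ℕ → ℕ) (x : ℕ) (o : ONote) :
    (∀ a', fseqS s x o = Sum.inl (some a') → a' < o) ∧
      (∀ b, fseqS s x o = Sum.inr b → b < o) := by
  induction o with
  | zero =>
    constructor <;> intro a h <;> simp [fseqS] at h
  | oadd e n a ihe iha =>
    have hn1 : 1 ≤ (n : ℕ) := n.one_le
    have hrepr : ONote.repr (ONote.oadd e n a) = ω ^ e.repr * (n : ℕ) + a.repr := rfl
    rcases ha : fseqS s x a with (_ | a') | b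
    · rcases he : fseqS s x e with (_ | e') | e''
      · cases hn : n.natPred with
        | zero =>
          constructor <;> intro c hc <;> simp only [fseqS, ha, he, hn] at hc
          · injection hc with hc; injection hc with hc; subst hc
            exact ONote.oadd_pos e n a
          · simp at hc
        | succ m =>
          have hn' : (n : ℕ) = m + 2 := by have := PNat.natPred_add_one n; omega
          constructor <;> intro c hc <;> simp only [fseqS, ha, he, hn] at hc
          · injection hc with hc; injection hc with hc; subst hc
            rw [ONote.lt_def, hrepr]
            have h1 : ONote.repr (ONote.oadd 0 m.succPNat 0) = ((m + 1 : ℕ) : Ordinal) := by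
              show ω ^ ONote.repr 0 * (m.succPNat : ℕ) + ONote.repr 0 = _
              show ω ^ (0 : Ordinal) * (m.succPNat : ℕ) + (0 : Ordinal) = _
              rw [opow_zero, one_mul, add_zero, Nat.succPNat_coe]
            rw [h1]
            exact aux0 (by omega)
          · simp at hc
      · cases hn : n.natPred with
        | zero =>
          constructor <;> intro c hc <;> simp only [fseqS, ha, he, hn] at hc
          · simp at hc
          · injection hc with hc; subst hc
            rw [ONote.lt_def, hrepr]
            exact aux1 hn1 (repr_opowMulNat_lt (ihe.1 e' he) (s x))
        | succ m =>
          have hn' : (n : ℕ) = m + 2 := by have := PNat.natPred_add_one n; omega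
          constructor <;> intro c hc <;> simp only [fseqS, ha, he, hn] at hc
          · simp at hc
          · injection hc with hc; subst hc
            rw [ONote.lt_def, hrepr]
            have h1 : ONote.repr (ONote.oadd e m.succPNat (opowMulNat e' (s x))) =
                ω ^ e.repr * ((m + 1 : ℕ) : Ordinal) + ONote.repr (opowMulNat e' (s x)) := by
              show ω ^ e.repr * (m.succPNat : ℕ) + _ = _
              rw [Nat.succPNat_coe]
            rw [h1, hn']
            exact aux2 (le_refl _) (repr_opowMulNat_lt (ihe.1 e' he) (s x))
      · cases hn : n.natPred with
        | zero =>
          constructor <;> intro c hc <;> simp only [fseqS, ha, he, hn] at hc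
          · simp at hc
          · injection hc with hc; subst hc
            rw [ONote.lt_def, hrepr]
            exact aux1 hn1 (by simpa using ONote.lt_def.1 (ihe.2 e'' he))
        | succ m =>
          have hn' : (n : ℕ) = m + 2 := by have := PNat.natPred_add_one n; omega
          constructor <;> intro c hc <;> simp only [fseqS, ha, he, hn] at hc
          · simp at hc
          · injection hc with hc; subst hc
            rw [ONote.lt_def, hrepr]
            have h1 : ONote.repr (ONote.oadd e m.succPNat (ONote.oadd e'' 1 0)) =
                ω ^ e.repr * ((m + 1 : ℕ) : Ordinal) + ONote.repr (ONote.oadd e'' 1 0) := by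
              show ω ^ e.repr * (m.succPNat : ℕ) + _ = _
              rw [Nat.succPNat_coe]
            rw [h1, hn']
            exact aux2 (le_refl _) (by simpa using ONote.lt_def.1 (ihe.2 e'' he))
    · constructor <;> intro c hc <;> simp only [fseqS, ha] at hc
      · injection hc with hc; injection hc with hc; subst hc
        exact ONote.oadd_lt_oadd_3 (iha.1 a' ha)
      · simp at hc
    · constructor <;> intro c hc <;> simp only [fseqS, ha] at hc
      · simp at hc
      · injection hc with hc; subst hc
        exact ONote.oadd_lt_oadd_3 (iha.2 b ha)

/-- The fast-growing hierarchy `F_{α,s}` with respect to the `s`-assignment of fundamental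
sequences: `F_{0,s}(x) = x+1`, `F_{α+1,s}(x) = F_{α,s}^[s(x)](x)`, and
`F_{λ,s}(x) = F_{λ(x)_s,s}(x)` for `λ` a limit. -/
def FGHs (s : ℕ → ℕ) : ONote → ℕ → ℕ
  | o => fun x =>
    match hfs : fseqS s x o with
    | Sum.inl none => x + 1
    | Sum.inl (some a) =>
      have : a < o := (fseqS_lt s x o).1 a hfs
      (FGHs s a)^[s x] x
    | Sum.inr b =>
      have : b < o := (fseqS_lt s x o).2 b hfs
      FGHs s b x
  termination_by o => o

/-! Part (i) is proved in the stronger form `s (F_{α,s}(x)) ≤ F_{s,α}(s(x))`, which is what survives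
the induction on `α`. At a successor both sides iterate the previous level, `s(x)` times on the left
and `s(x) + 1` resp. `x + 1 ≥ s(x)` times on the right, and the hierarchy `F_{h,·}` consists of
monotone, expansive functions. At a limit `λ` the value `λ(x)_s` is in general not a term of the
standard fundamental sequence, but whenever `s(x) ≤ n + 1` it is reached from `λ[n]` by finitely
many steps of the form "pass to the predecessor" or "pass to the `n`-th term of the fundamental
sequence", and `F_{h,·}(n)` can only decrease along such steps. This is applied
with `n = s(x)` in (i) and `n = x` in (ii). -/

instance : WellFoundedLT ONote := ⟨InvImage.wf repr Ordinal.lt_wf⟩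

theorem FGH_def (h : ℕ → ℕ) {o : ONote} {x} (e : fundamentalSequence o = x) :
    FGH h o =
      match
        (motive := (x : Option ONote ⊕ (ℕ → ONote)) → FundamentalSequenceProp o x → ℕ → ℕ)
        x, e ▸ fundamentalSequence_has_prop o with
      | Sum.inl none, _ => h
      | Sum.inl (some a), _ => fun i => (FGH h a)^[i + 1] i
      | Sum.inr f, _ => fun i => FGH h (f i) i := by
  subst x; rw [FGH]

theorem FGH_zero' (h : ℕ → ℕ) {o : ONote} (e : fundamentalSequence o = Sum.inl none) (x : ℕ) :
    FGH h o x = h x := by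
  rw [FGH_def h e]

theorem FGH_succ (h : ℕ → ℕ) {o a : ONote} (e : fundamentalSequence o = Sum.inl (some a))
    (x : ℕ) : FGH h o x = (FGH h a)^[x + 1] x := by
  rw [FGH_def h e]

theorem FGH_limit (h : ℕ → ℕ) {o : ONote} {f : ℕ → ONote}
    (e : fundamentalSequence o = Sum.inr f) (x : ℕ) : FGH h o x = FGH h (f x) x := by
  rw [FGH_def h e]

-- The two assignments agree on zero and on successors, and have limits at the same places.
theorem fseqS_map_eq_map_fundamentalSequence (s : ℕ → ℕ) (x : ℕ) (o : ONote) :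
    (fseqS s x o).map id (fun _ => ()) = (fundamentalSequence o).map id (fun _ => ()) := by
  induction o with
  | zero => rfl
  | oadd e c a ihe iha =>
    rcases ha : fseqS s x a with (_ | a') | b <;>
      rcases ha' : fundamentalSequence a with (_ | a'') | f <;>
      simp only [ha, ha', Sum.map_inl, Sum.map_inr, id, Sum.inl.injEq, reduceCtorEq,
        Option.some.injEq] at iha
    · rcases he : fseqS s x e with (_ | e') | b <;>
        rcases he' : fundamentalSequence e with (_ | e'') | g <;>
        simp only [he, he', Sum.map_inl, Sum.map_inr, id, Sum.inl.injEq, reduceCtorEq,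
          Option.some.injEq] at ihe <;>
        rcases hc : c.natPred with _ | m <;>
        simp [fseqS, fundamentalSequence, ha, ha', he, he', hc, ihe]
    · simp [fseqS, fundamentalSequence, ha, ha', iha]
    · simp [fseqS, fundamentalSequence, ha, ha']

section SAssignment

variable {s : ℕ → ℕ} {x : ℕ} {o : ONote}

theorem fseqS_eq_inl {a : Option ONote} (h : fundamentalSequence o = Sum.inl a) :
    fseqS s x o = Sum.inl a := by
  have := fseqS_map_eq_map_fundamentalSequence s x o
  rw [h] at this
  rcases hs : fseqS s x o with a' | b <;> simp_all

theorem exists_fseqS_eq_inr {f : ℕ → ONote} (h : fundamentalSequence o = Sum.inr f) :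
    ∃ b, fseqS s x o = Sum.inr b := by
  have := fseqS_map_eq_map_fundamentalSequence s x o
  rw [h] at this
  rcases hs : fseqS s x o with a' | b <;> simp_all

theorem FGHs_zero' (h : fundamentalSequence o = Sum.inl none) : FGHs s o x = x + 1 := by
  have := fseqS_eq_inl (s := s) (x := x) h
  rw [FGHs]; beta_reduce; split <;> simp_all

theorem FGHs_succ {a : ONote} (h : fundamentalSequence o = Sum.inl (some a)) :
    FGHs s o x = (FGHs s a)^[s x] x := by
  have := fseqS_eq_inl (s := s) (x := x) h
  rw [FGHs]; beta_reduce; split <;> simp_all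

theorem FGHs_limit {b : ONote} (h : fseqS s x o = Sum.inr b) : FGHs s o x = FGHs s b x := by
  rw [FGHs]; beta_reduce; split <;> simp_all

end SAssignment

inductive FundStep (n : ℕ) : ONote → ONote → Prop
  | succ {o a : ONote} : fundamentalSequence o = Sum.inl (some a) → FundStep n o a
  | limit {o : ONote} {f : ℕ → ONote} : fundamentalSequence o = Sum.inr f → FundStep n o (f n)

abbrev FundReach (n : ℕ) : ONote → ONote → Prop := Relation.ReflTransGen (FundStep n)

theorem FundStep.lt {n : ℕ} {o b : ONote} (h : FundStep n o b) : b < o := by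
  have hp := fundamentalSequence_has_prop o
  cases h with
  | succ h => rw [h] at hp; rw [ONote.lt_def, hp.1]; exact Order.lt_succ _
  | limit h => rw [h] at hp; exact (hp.2.1 n).2.1

theorem FundStep.oadd_tail {n : ℕ} {a b : ONote} (e : ONote) (c : ℕ+) (h : FundStep n a b) :
    FundStep n (oadd e c a) (oadd e c b) := by
  cases h with
  | succ h => exact .succ (by simp only [fundamentalSequence, h])
  | @limit f h =>
    exact .limit (f := fun i => oadd e c (f i)) (by simp only [fundamentalSequence, h])

theorem FundReach.oadd_tail {n : ℕ} {a b : ONote} (e : ONote) (c : ℕ+) (h : FundReach n a b) :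
    FundReach n (oadd e c a) (oadd e c b) :=
  h.lift (oadd e c ·) fun _ _ => FundStep.oadd_tail e c

theorem fundReach_zero (n : ℕ) (o : ONote) : FundReach n o 0 := by
  induction o using WellFoundedLT.induction with
  | _ o ih =>
  rcases h : fundamentalSequence o with (_ | a) | f
  · rw [(fundamentalSequenceProp_inl_none o).1 (h ▸ fundamentalSequence_has_prop o)]
  · exact .head (.succ h) (ih a (FundStep.succ (n := n) h).lt)
  · exact .head (.limit h) (ih (f n) (FundStep.limit h).lt)

theorem fundReach_opowMulNat_succ (n : ℕ) (e : ONote) (k : ℕ) :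
    FundReach n (opowMulNat e (k + 1)) (opowMulNat e k) := by
  rcases k with _ | k
  · exact fundReach_zero n _
  rcases he : fundamentalSequence e with (_ | e') | g
  · rw [(fundamentalSequenceProp_inl_none e).1 (he ▸ fundamentalSequence_has_prop e)]
    refine .single (.succ ?_)
    simp only [opowMulNat, fundamentalSequence, Nat.natPred_succPNat]; rfl
  · refine .head (.limit (f := fun i => oadd e k.succPNat (oadd e' i.succPNat 0)) ?_)
      ((fundReach_zero n _).oadd_tail e _)
    simp only [opowMulNat, fundamentalSequence, he, Nat.natPred_succPNat]; rfl
  · refine .head (.limit (f := fun i => oadd e k.succPNat (oadd (g i) 1 0)) ?_)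
      ((fundReach_zero n _).oadd_tail e _)
    simp only [opowMulNat, fundamentalSequence, he, Nat.natPred_succPNat]; rfl

theorem fundReach_opowMulNat (n : ℕ) (e : ONote) {j k : ℕ} (h : j ≤ k) :
    FundReach n (opowMulNat e k) (opowMulNat e j) := by
  induction h with
  | refl => exact .refl
  | step _ ih => exact (fundReach_opowMulNat_succ n e _).trans ih

theorem FundReach.omega_pow {n : ℕ} {a b : ONote} (h : FundReach n a b) :
    FundReach n (oadd a 1 0) (oadd b 1 0) := by
  refine h.lift' (oadd · 1 0) fun p q hpq => ?_
  cases hpq with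
  | succ hp =>
    refine .head (.limit (f := fun i => opowMulNat q (i + 1)) ?_)
      (fundReach_opowMulNat n q (by omega : 1 ≤ n + 1))
    simp only [fundamentalSequence, hp]; rfl
  | @limit f hp =>
    refine .single (.limit (f := fun i => oadd (f i) 1 0) ?_)
    simp only [fundamentalSequence, hp]; rfl

theorem fseqS_eq_inr {s : ℕ → ℕ} {x k : ℕ} {o : ONote} {f : ℕ → ONote}
    (hf : fundamentalSequence o = Sum.inr f) (hs : s x = k + 1) :
    fseqS s x o = Sum.inr (f k) := by
  induction o generalizing f with
  | zero => cases hf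
  | oadd e c a ihe iha =>
    rcases ha : fundamentalSequence a with (_ | a') | fa
    · rcases he : fundamentalSequence e with (_ | e') | g
      · rcases hc : c.natPred with _ | m <;>
          simp only [fundamentalSequence, ha, he, hc, reduceCtorEq] at hf
      · rcases hc : c.natPred with _ | m <;>
          simp only [fundamentalSequence, fseqS, ha, he, hc, fseqS_eq_inl ha, fseqS_eq_inl he,
            Sum.inr.injEq] at hf ⊢ <;> subst hf <;> rw [hs] <;> rfl
      · rcases hc : c.natPred with _ | m <;>
          simp only [fundamentalSequence, fseqS, ha, he, hc, fseqS_eq_inl ha, ihe he,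
            Sum.inr.injEq] at hf ⊢ <;> subst hf <;> rfl
    · simp only [fundamentalSequence, ha, reduceCtorEq] at hf
    · simp only [fundamentalSequence, ha, Sum.inr.injEq] at hf
      subst hf
      simp only [fseqS, iha ha]

theorem fundReach_fseqS {s : ℕ → ℕ} {x n : ℕ} {o b : ONote} {f : ℕ → ONote}
    (hf : fundamentalSequence o = Sum.inr f) (hb : fseqS s x o = Sum.inr b) (hn : s x ≤ n + 1) :
    FundReach n (f n) b := by
  induction o generalizing f b with
  | zero => cases hf
  | oadd e c a ihe iha =>
    rcases ha : fundamentalSequence a with (_ | a') | fa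
    · rcases he : fundamentalSequence e with (_ | e') | g
      · rcases hc : c.natPred with _ | m <;>
          simp only [fundamentalSequence, ha, he, hc, reduceCtorEq] at hf
      · rcases hc : c.natPred with _ | m <;>
          simp only [fundamentalSequence, fseqS, ha, he, hc, fseqS_eq_inl ha, fseqS_eq_inl he,
            Sum.inr.injEq] at hf hb <;> subst hf hb
        · exact fundReach_opowMulNat n e' hn
        · exact (fundReach_opowMulNat n e' hn).oadd_tail e _
      · obtain ⟨b', hb'⟩ := exists_fseqS_eq_inr (s := s) (x := x) he
        rcases hc : c.natPred with _ | m <;>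
          simp only [fundamentalSequence, fseqS, ha, he, hc, fseqS_eq_inl ha, hb',
            Sum.inr.injEq] at hf hb <;> subst hf hb
        · exact (ihe he hb').omega_pow
        · exact (ihe he hb').omega_pow.oadd_tail e _
    · simp only [fundamentalSequence, ha, reduceCtorEq] at hf
    · obtain ⟨b', hb'⟩ := exists_fseqS_eq_inr (s := s) (x := x) ha
      simp only [fundamentalSequence, fseqS, ha, hb', Sum.inr.injEq] at hf hb
      subst hf hb
      exact (iha ha hb').oadd_tail e c

section FGH

variable {h : ℕ → ℕ} (hh : ∀ y, y < h y)
include hh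

theorem lt_FGH (o : ONote) (x : ℕ) : x < FGH h o x := by
  induction o using WellFoundedLT.induction generalizing x with
  | _ o ih =>
  rcases hf : fundamentalSequence o with (_ | a) | f
  · rw [FGH_zero' h hf]; exact hh x
  · have ha := ih a (FundStep.succ (n := 0) hf).lt
    rw [FGH_succ h hf, Function.iterate_succ_apply]
    exact (ha x).trans_le (Function.id_le_iterate_of_id_le (fun y => (ha y).le) x _)
  · rw [FGH_limit h hf]; exact ih _ (FundStep.limit (n := x) hf).lt x

theorem FGH_le_of_fundStep {n : ℕ} {o b : ONote} (hs : FundStep n o b) :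
    FGH h b n ≤ FGH h o n := by
  cases hs with
  | succ hf =>
    rw [FGH_succ h hf, Function.iterate_succ_apply]
    exact Function.id_le_iterate_of_id_le (fun y => (lt_FGH hh b y).le) n _
  | limit hf => rw [FGH_limit h hf]

theorem FGH_le_of_fundReach {n : ℕ} {o b : ONote} (hr : FundReach n o b) :
    FGH h b n ≤ FGH h o n := by
  induction hr with
  | refl => exact le_rfl
  | tail _ hs ih => exact (FGH_le_of_fundStep hh hs).trans ih

theorem monotone_FGH (hm : Monotone h) (o : ONote) : Monotone (FGH h o) := by
  induction o using WellFoundedLT.induction with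
  | _ o ih =>
  intro x y hxy
  rcases hf : fundamentalSequence o with (_ | a) | f
  · simp only [FGH_zero' h hf]; exact hm hxy
  · have ha := ih a (FundStep.succ (n := 0) hf).lt
    simp only [FGH_succ h hf]
    calc (FGH h a)^[x + 1] x ≤ (FGH h a)^[x + 1] y := (ha.iterate _) hxy
      _ ≤ (FGH h a)^[y + 1] y :=
        Function.monotone_iterate_of_id_le (fun z => (lt_FGH hh a z).le) (by omega) y
  · simp only [FGH_limit h hf]
    -- `f x` is `o(x)_s` for `s = Nat.succ`
    have hreach : FundReach y (f y) (f x) :=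
      fundReach_fseqS (s := Nat.succ) hf (fseqS_eq_inr hf rfl) (by omega)
    calc FGH h (f x) x ≤ FGH h (f x) y := ih _ (FundStep.limit hf).lt hxy
      _ ≤ FGH h (f y) y := FGH_le_of_fundReach hh hreach

end FGH

section FGHs

variable {s : ℕ → ℕ}

theorem apply_FGHs_le_FGH_apply (hm : Monotone s) (hs : ∀ y, y < s y) (o : ONote) (x : ℕ) :
    s (FGHs s o x) ≤ FGH s o (s x) := by
  induction o using WellFoundedLT.induction generalizing x with
  | _ o ih =>
  rcases hf : fundamentalSequence o with (_ | a) | f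
  · rw [FGH_zero' s hf, FGHs_zero' hf]; exact hm (hs x)
  · have ha : s ∘ FGHs s a ≤ FGH s a ∘ s := ih a (FundStep.succ (n := 0) hf).lt
    rw [FGH_succ s hf, FGHs_succ hf]
    calc s ((FGHs s a)^[s x] x) ≤ (FGH s a)^[s x] (s x) :=
          (monotone_FGH hs hm a).le_iterate_comp_of_le ha _ x
      _ ≤ (FGH s a)^[s x + 1] (s x) :=
        Function.monotone_iterate_of_id_le (fun z => (lt_FGH hs a z).le) (by omega) _
  · obtain ⟨b, hb⟩ := exists_fseqS_eq_inr (s := s) (x := x) hf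
    rw [FGHs_limit hb, FGH_limit s hf]
    exact (ih b ((fseqS_lt s x o).2 b hb) x).trans
      (FGH_le_of_fundReach hs (fundReach_fseqS hf hb (Nat.le_succ _)))

theorem FGHs_le_FGH_succ (hs : ∀ y, s y ≤ y) (o : ONote) (x : ℕ) :
    FGHs s o x ≤ FGH Nat.succ o x := by
  induction o using WellFoundedLT.induction generalizing x with
  | _ o ih =>
  rcases hf : fundamentalSequence o with (_ | a) | f
  · rw [FGH_zero' _ hf, FGHs_zero' hf]
  · have ha : FGHs s a ≤ FGH Nat.succ a := ih a (FundStep.succ (n := 0) hf).lt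
    rw [FGH_succ _ hf, FGHs_succ hf]
    calc (FGHs s a)^[s x] x ≤ (FGH Nat.succ a)^[s x] x :=
          (monotone_FGH Nat.lt_succ_self (fun _ _ => Nat.succ_le_succ) a).le_iterate_of_le ha _ x
      _ ≤ (FGH Nat.succ a)^[x + 1] x :=
        Function.monotone_iterate_of_id_le (fun z => (lt_FGH Nat.lt_succ_self a z).le)
          ((hs x).trans x.le_succ) _
  · obtain ⟨b, hb⟩ := exists_fseqS_eq_inr (s := s) (x := x) hf
    rw [FGHs_limit hb, FGH_limit _ hf]
    exact (ih b ((fseqS_lt s x o).2 b hb) x).trans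
      (FGH_le_of_fundReach Nat.lt_succ_self (fundReach_fseqS hf hb ((hs x).trans x.le_succ)))

end FGHs

theorem fastGrowing_nonstandard_fundamental_seqs_general (s : ℕ → ℕ) (hmono : Monotone s)
    (α : ONote) :
    ((∀ x, x < s x) → ∀ x, FGHs s α x ≤ FGH s α (s x)) ∧
      ((∀ x, s x ≤ x) → ∀ x, FGHs s α x ≤ FGH Nat.succ α x) :=
  ⟨fun hs x => (hs _).le.trans (apply_FGHs_le_FGH_apply hmono hs α x),
    fun hs => FGHs_le_FGH_succ hs α⟩

/-- Let `s : ℕ → ℕ` be a monotone function and `α < ε₀`.  (i) If `s` is strictly expansive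
(`s(x) > x` for all `x`), then `F_{α,s}(x) ≤ F_{s,α}(s(x))` for all `x`.  (ii) If instead
`s(x) ≤ x` for all `x`, then `F_{α,s}(x) ≤ F_α(x)` for all `x`. -/
theorem fastGrowing_nonstandard_fundamental_seqs (s : ℕ → ℕ) (hmono : Monotone s)
    (α : ONote) (hNF : α.NF) :
    ((∀ x, x < s x) → ∀ x, FGHs s α x ≤ FGH s α (s x)) ∧
      ((∀ x, s x ≤ x) → ∀ x, FGHs s α x ≤ FGH Nat.succ α x) :=
  fastGrowing_nonstandard_fundamental_seqs_general s hmono α
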